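/- arXiv:2501.03808 — 4 statements merged into one kernel-verified Lean document; each statement's English description precedes it below -/
import Mathlib

section
/- Special soundness of the Schnorr protocol: given two accepting transcripts (t, c₁, s₁) and (t, c₂, s₂) with the same first message t but distinct challenges c₁ ≠ c₂, satisfying t · a^{c₁} = b^{s₁} and t · a^{c₂} = b^{s₂}, one can extract x = (s₁ − s₂)/(c₁ − c₂) such that a = b^x. -/
private lemma pow_zmod_eq {G : Type*} [Group G] {p : ℕ} [NeZero p] {g : G}
    (hg : g ^ p = 1) (n : ℕ) : g ^ (n % p) = g ^ n := by
  conv_rhs => rw [← Nat.div_add_mod n p]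
  rw [pow_add, pow_mul, hg, one_pow, one_mul]

private lemma pow_zmod_add {G : Type*} [Group G] {p : ℕ} [NeZero p] {g : G}
    (hg : g ^ p = 1) (x y : ZMod p) : g ^ ((x + y).val) = g ^ x.val * g ^ y.val := by
  rw [ZMod.val_add, pow_zmod_eq hg, pow_add]

private lemma pow_zmod_mul {G : Type*} [Group G] {p : ℕ} [NeZero p] {g : G}
    (hg : g ^ p = 1) (x y : ZMod p) : g ^ ((x * y).val) = g ^ (x.val * y.val) := by
  rw [ZMod.val_mul, pow_zmod_eq hg]

/-- Special soundness of the Schnorr protocol: two accepting transcripts with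
the same first message and distinct challenges yield the discrete log
`x = (s₁ - s₂)/(c₁ - c₂)` with `a = b^x`. -/
theorem schnorr_special_soundness
    {G : Type*} [CommGroup G] (p : ℕ) [Fact p.Prime]
    (b a t : G) (hb : b ^ p = 1) (ha : a ^ p = 1)
    (c₁ c₂ s₁ s₂ : ZMod p) (hc : c₁ ≠ c₂)
    (h₁ : t * a ^ c₁.val = b ^ s₁.val)
    (h₂ : t * a ^ c₂.val = b ^ s₂.val) :
    a = b ^ (((s₁ - s₂) / (c₁ - c₂)).val) := by
  have hp : 1 < p := (Fact.out : p.Prime).one_lt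
  set d := c₁ - c₂ with hd_def
  set x := (s₁ - s₂) / d with hx_def
  have hd : d ≠ 0 := sub_ne_zero.mpr hc
  -- a ^ d.val = b ^ (s₁ - s₂).val
  have ha1 : a ^ c₁.val = a ^ d.val * a ^ c₂.val := by
    have : c₁ = d + c₂ := by ring
    rw [this, pow_zmod_add ha]
  have hb1 : b ^ s₁.val = b ^ (s₁ - s₂).val * b ^ s₂.val := by
    have : s₁ = (s₁ - s₂) + s₂ := by ring
    conv_lhs => rw [this]
    rw [pow_zmod_add hb]
  have key : a ^ d.val = b ^ (s₁ - s₂).val := by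
    have := h₁
    rw [ha1, hb1, ← mul_assoc] at this
    have h2' : t * a ^ c₂.val = b ^ s₂.val := h₂
    calc a ^ d.val = a ^ d.val * (t * a ^ c₂.val) * (b ^ s₂.val)⁻¹ := by
          rw [h2']; group
      _ = t * a ^ d.val * a ^ c₂.val * (b ^ s₂.val)⁻¹ := by
          show a ^ d.val * (t * a ^ c₂.val) * (b ^ s₂.val)⁻¹ = _; ac_rfl
      _ = b ^ (s₁ - s₂).val * b ^ s₂.val * (b ^ s₂.val)⁻¹ := by rw [this]
      _ = b ^ (s₁ - s₂).val := by group
  have hxd : x * d = s₁ - s₂ := div_mul_cancel₀ _ hd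
  have key2 : a ^ d.val = (b ^ x.val) ^ d.val := by
    rw [key, ← hxd, pow_zmod_mul hb, pow_mul]
  -- raise both sides to d⁻¹
  have hbx : (b ^ x.val) ^ p = 1 := by
    rw [← pow_mul, mul_comm, pow_mul, hb, one_pow]
  have hde : d * d⁻¹ = 1 := mul_inv_cancel₀ hd
  have hval1 : ((1 : ZMod p)).val = 1 := ZMod.val_one p
  calc a = a ^ ((d * d⁻¹).val) := by rw [hde, hval1, pow_one]
    _ = (a ^ d.val) ^ (d⁻¹).val := by rw [pow_zmod_mul ha, pow_mul]
    _ = ((b ^ x.val) ^ d.val) ^ (d⁻¹).val := by rw [key2]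
    _ = (b ^ x.val) ^ ((d * d⁻¹).val) := by rw [pow_zmod_mul hbx, pow_mul]
    _ = b ^ x.val := by rw [hde, hval1, pow_one]
end

section
/- Knowledge extraction in Maurer's protocol: let φ : G₁ → G₂ be a group homomorphism, z ∈ G₂, ℓ ∈ ℤ and u ∈ G₁ with φ(u) = z^ℓ. Given two accepting transcripts (t, c₁, s₁), (t, c₂, s₂) with φ(s₁) = t·z^{c₁}, φ(s₂) = t·z^{c₂}, and integers a, b with a(c₁ − c₂) + bℓ = 1, the element x̃ = a·(s₁ − s₂) + b·u satisfies φ(x̃) = z. -/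
/-- Knowledge extraction in Maurer's protocol: given `φ(u) = z^ℓ`, two accepting
transcripts with challenges `c₁ ≠ c₂`, and Bézout coefficients
`a(c₁ - c₂) + bℓ = 1`, the element `x̃ = a·(s₁ - s₂) + b·u` satisfies
`φ(x̃) = z`. -/
theorem maurer_knowledge_extraction
    {G₁ : Type*} [AddCommGroup G₁] {G₂ : Type*} [CommGroup G₂]
    (φ : G₁ → G₂) (hφ : ∀ a b : G₁, φ (a + b) = φ a * φ b)
    (z t : G₂) (u s₁ s₂ : G₁) (ℓ c₁ c₂ a b : ℤ)
    (hu : φ u = z ^ ℓ)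
    (h₁ : φ s₁ = t * z ^ c₁)
    (h₂ : φ s₂ = t * z ^ c₂)
    (hbezout : a * (c₁ - c₂) + b * ℓ = 1) :
    φ (a • (s₁ - s₂) + b • u) = z := by
  let F : G₁ →+ Additive G₂ := AddMonoidHom.mk' (fun x => Additive.ofMul (φ x)) hφ
  have hF : ∀ x : G₁, φ x = Additive.toMul (F x) := fun x => rfl
  have hzsmul : ∀ (n : ℤ) (x : G₁), φ (n • x) = φ x ^ n := by
    intro n x
    rw [hF, map_zsmul]
    rfl
  have hsub : φ (s₁ - s₂) = z ^ (c₁ - c₂) := by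
    have key : φ (s₁ - s₂) * φ s₂ = φ s₁ := by
      rw [← hφ, sub_add_cancel]
    rw [h₁, h₂] at key
    have hz : φ (s₁ - s₂) = (t * z ^ c₁) * (t * z ^ c₂)⁻¹ :=
      eq_mul_inv_of_mul_eq key
    rw [hz, zpow_sub]
    group
    rw [zpow_neg_one]
    exact mul_inv_cancel_comm t (z ^ (c₁ - c₂))
  rw [hφ, hzsmul, hzsmul, hsub, hu, ← zpow_mul, ← zpow_mul, ← zpow_add]
  have : (c₁ - c₂) * a + ℓ * b = 1 := by linarith
  rw [this, zpow_one]
end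

section
/- Correctness of the inter-transactions rate proof: let c₁ = ∏_{t∈S₁} cmₜ, c₂ = ∏_{t∈S₂} cmₜ, τ₁ = ∏_{t∈S₁} tkₜ, τ₂ = ∏_{t∈S₂} tkₜ where cmₜ = g^{vₜ} h^{rₜ} and tkₜ = pk^{rₜ}, pk = h^{sk}. If N·(∑_{t∈S₁} vₜ) = D·(∑_{t∈S₂} vₜ), then c := c₁^N · c₂^{−D} = h^{N Σr₁ − D Σr₂} and τ := τ₁^N · τ₂^{−D} satisfy τ = c^{sk}, where Σr₁ = ∑_{t∈S₁} rₜ and Σr₂ = ∑_{t∈S₂} rₜ. -/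
/-! Raising an element `x` with `x ^ p = 1` to the power `a.val` depends only on the residue
`a : ZMod p`, so `a ↦ x ^ a.val` turns sums and integer combinations in `ZMod p` into products and
integer powers in `G`. Taking the combination `N • Σv₁ - D • Σv₂ = 0` kills the `g`-part of `c`,
leaving `c = h ^ e` and `τ = pk ^ e = (h ^ e) ^ sk` for the same exponent `e`. -/

open Finset

section PowVal

variable {G : Type*} {p : ℕ} [NeZero p]

theorem pow_val_eq_zpow_of_intCast_eq [Group G] {x : G} (hx : x ^ p = 1) {a : ZMod p} {n : ℤ}
    (hn : (n : ZMod p) = a) : x ^ a.val = x ^ n := by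
  rw [← zpow_natCast, ← orderOf_dvd_sub_iff_zpow_eq_zpow]
  refine Int.dvd_trans (Int.natCast_dvd_natCast.mpr (orderOf_dvd_of_pow_eq_one hx)) ?_
  rw [← ZMod.intCast_zmod_eq_zero_iff_dvd]
  push_cast
  rw [ZMod.natCast_zmod_val, hn, sub_self]

theorem pow_val_sum [CommGroup G] {x : G} (hx : x ^ p = 1) {ι : Type*} (s : Finset ι)
    (f : ι → ZMod p) : x ^ (∑ t ∈ s, f t).val = ∏ t ∈ s, x ^ (f t).val := by
  rw [prod_pow_eq_pow_sum, pow_val_eq_zpow_of_intCast_eq hx (n := ((∑ t ∈ s, (f t).val : ℕ) : ℤ)),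
    zpow_natCast]
  simp

theorem pow_val_zsmul_sub_zsmul [Group G] {x : G} (hx : x ^ p = 1) (N D : ℤ) (a b : ZMod p) :
    x ^ (N • a - D • b).val = (x ^ a.val) ^ N * ((x ^ b.val) ^ D)⁻¹ := by
  rw [pow_val_eq_zpow_of_intCast_eq hx (n := N * a.val - D * b.val), zpow_sub, mul_comm N,
    mul_comm D, zpow_mul, zpow_mul, zpow_natCast, zpow_natCast]
  simp [zsmul_eq_mul]

end PowVal

/-- Correctness of the inter-transactions rate proof: with
`c = c₁^N · c₂^{-D}` and `τ = τ₁^N · τ₂^{-D}` built from commitments and tokens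
over transaction subsets `S₁, S₂`, if `N·(∑_{S₁} v) = D·(∑_{S₂} v)` then
`c = h^{NΣr₁ - DΣr₂}` and `τ = c^{sk}`. -/
theorem inter_transactions_rate_correct
    {G : Type*} [CommGroup G] (p : ℕ) [Fact p.Prime]
    (g h : G) (hexp : ∀ x : G, x ^ p = 1)
    (sk : ZMod p) (pk : G) (hpk : pk = h ^ sk.val)
    {ι : Type*} (S₁ S₂ : Finset ι) (v r : ι → ZMod p)
    (N D : ℤ)
    (hrate : N • (∑ t ∈ S₁, v t) = D • (∑ t ∈ S₂, v t))
    (c τ : G)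
    (hc : c = (∏ t ∈ S₁, (g ^ (v t).val * h ^ (r t).val)) ^ N
            * ((∏ t ∈ S₂, (g ^ (v t).val * h ^ (r t).val)) ^ D)⁻¹)
    (hτ : τ = (∏ t ∈ S₁, pk ^ (r t).val) ^ N
            * ((∏ t ∈ S₂, pk ^ (r t).val) ^ D)⁻¹) :
    c = h ^ (N • (∑ t ∈ S₁, r t) - D • (∑ t ∈ S₂, r t)).val ∧ τ = c ^ sk.val := by
  have hc_split : c = g ^ (N • (∑ t ∈ S₁, v t) - D • (∑ t ∈ S₂, v t)).val
      * h ^ (N • (∑ t ∈ S₁, r t) - D • (∑ t ∈ S₂, r t)).val := by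
    rw [hc, prod_mul_distrib, prod_mul_distrib, ← pow_val_sum (hexp g), ← pow_val_sum (hexp g),
      ← pow_val_sum (hexp h), ← pow_val_sum (hexp h), pow_val_zsmul_sub_zsmul (hexp g),
      pow_val_zsmul_sub_zsmul (hexp h), mul_zpow, mul_zpow, mul_inv, mul_mul_mul_comm]
  have hc_eq : c = h ^ (N • (∑ t ∈ S₁, r t) - D • (∑ t ∈ S₂, r t)).val := by
    rw [hc_split, hrate, sub_self, ZMod.val_zero, pow_zero, one_mul]
  have hτ_eq : τ = pk ^ (N • (∑ t ∈ S₁, r t) - D • (∑ t ∈ S₂, r t)).val := by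
    rw [hτ, ← pow_val_sum (hexp pk), ← pow_val_sum (hexp pk), pow_val_zsmul_sub_zsmul (hexp pk)]
  refine ⟨hc_eq, ?_⟩
  rw [hτ_eq, hc_eq, hpk, ← pow_mul, ← pow_mul, mul_comm]
end

section
/- Transaction imbalance yields discrete log: suppose g has prime order p, h = g^x with x unknown, values vᵢ and randomness rᵢ : ZMod p satisfy ∏ᵢ g^{vᵢ} h^{rᵢ} = 1 but ∑ᵢ vᵢ = V ≠ 0. If R := ∑ᵢ rᵢ ≠ 0, then x = −V/R. Moreover if R = 0 then V = 0, so with V ≠ 0 necessarily R ≠ 0 and x = −V/R. -/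
/-- Transaction imbalance yields discrete log: if `∏ᵢ g^{vᵢ} h^{rᵢ} = 1` with
`h = g^x`, `g` of prime order `p`, and `V = ∑ᵢ vᵢ ≠ 0`, then `R = ∑ᵢ rᵢ ≠ 0`
and `x = -V/R`. -/
theorem imbalance_yields_dlog
    {G : Type*} [CommGroup G] (p : ℕ) [Fact p.Prime]
    (g : G) (hord : orderOf g = p)
    (x : ZMod p) (h : G) (hh : h = g ^ x.val)
    (n : ℕ) (v r : Fin n → ZMod p)
    (hbal : ∏ i, (g ^ (v i).val * h ^ (r i).val) = 1)
    (hV : ∑ i, v i ≠ 0) :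
    (∑ i, r i) ≠ 0 ∧ x = -(∑ i, v i) / (∑ i, r i) := by
  have hkey : (∑ i, v i) + x * (∑ i, r i) = 0 := by
    have h1 : g ^ (∑ i, ((v i).val + x.val * (r i).val)) = 1 := by
      rw [← Finset.prod_pow_eq_pow_sum, ← hbal]
      refine Finset.prod_congr rfl fun i _ => ?_
      rw [pow_add, pow_mul, hh]
    have h2 : p ∣ ∑ i, ((v i).val + x.val * (r i).val) := by
      have := orderOf_dvd_of_pow_eq_one h1
      rwa [hord] at this
    have h3 : ((∑ i, ((v i).val + x.val * (r i).val) : ℕ) : ZMod p) = 0 :=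
      (ZMod.natCast_eq_zero_iff _ _).mpr h2
    push_cast [ZMod.natCast_val, ZMod.cast_id] at h3
    rw [Finset.sum_add_distrib, ← Finset.mul_sum] at h3
    linear_combination h3
  have hR : (∑ i, r i) ≠ 0 := by
    intro h0
    rw [h0, mul_zero, add_zero] at hkey
    exact hV hkey
  refine ⟨hR, ?_⟩
  field_simp
  linear_combination hkey
end
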